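/- Let φ be the PCA-factorised time-discretised Asian average price function in d+1 variables. Then for every point z ∈ ℝ^{d+1}, the partial derivative with respect to the first coordinate satisfies D⁰φ(z) ≥ σ τ_d · φ(z) > 0. -/

import Mathlib

open Real Filter MeasureTheory Finset

/-- `τ_d = √(T/((d+1)(2d+3)))`. -/
noncomputable def tau (d : ℕ) (T : ℝ) : ℝ :=
  Real.sqrt (T / (((d : ℝ) + 1) * (2 * (d : ℝ) + 3)))

/-- `χ_i = π(2i+1)/(2(2d+3))`. -/
noncomputable def chi (d i : ℕ) : ℝ := Real.pi * (2 * (i : ℝ) + 1) / (2 * (2 * (d : ℝ) + 3))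

/-- Entries of the PCA factor `A`. -/
noncomputable def Amat (d : ℕ) (T : ℝ) (k i : ℕ) : ℝ :=
  tau d T * Real.sin (2 * ((k : ℝ) + 1) * chi d i) / Real.sin (chi d i)

/-- The PCA-factorised time-discretised Asian average price function. -/
noncomputable def phi (d : ℕ) (S0 R σ T : ℝ) (y : Fin (d + 1) → ℝ) : ℝ :=
  (1 / ((d : ℝ) + 1)) * ∑ k : Fin (d + 1),
    S0 * Real.exp ((R - σ ^ 2 / 2) * ((k : ℝ) + 1) * T / ((d : ℝ) + 1)
      + σ * ∑ i : Fin (d + 1), Amat d T k i * y i)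

/-- First-order partial derivative in coordinate `i`. -/
noncomputable def pd (n : ℕ) (i : Fin n) (f : (Fin n → ℝ) → ℝ) : (Fin n → ℝ) → ℝ :=
  fun y => fderiv ℝ f y (Pi.single i 1)

/-- Mixed partial derivative `D^η = ∏_i ∂^{η_i}/∂y_i^{η_i}`. -/
noncomputable def mderiv {n : ℕ} (η : Fin n → ℕ) (f : (Fin n → ℝ) → ℝ) : (Fin n → ℝ) → ℝ :=
  (List.finRange n).foldr (fun i g => (pd n i)^[η i] g) f

/-- The linear part of the exponent, as a continuous linear map. -/
noncomputable def lmap (d : ℕ) (T : ℝ) (k : ℕ) : (Fin (d + 1) → ℝ) →L[ℝ] ℝ :=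
  ∑ i : Fin (d + 1), Amat d T k i • (ContinuousLinearMap.proj i : (Fin (d + 1) → ℝ) →L[ℝ] ℝ)

lemma lmap_apply (d : ℕ) (T : ℝ) (k : ℕ) (y : Fin (d + 1) → ℝ) :
    lmap d T k y = ∑ i : Fin (d + 1), Amat d T k i * y i := by
  simp [lmap]

lemma lmap_single (d : ℕ) (T : ℝ) (k : ℕ) :
    lmap d T k (Pi.single (0 : Fin (d + 1)) 1) = Amat d T k 0 := by
  rw [lmap_apply]
  rw [Finset.sum_eq_single (0 : Fin (d + 1))]
  · simp
  · intro i _ hi; simp [Pi.single_apply, hi.symm]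
  · simp

lemma phi_hasFDerivAt (d : ℕ) (S0 R σ T : ℝ) (z : Fin (d + 1) → ℝ) :
    HasFDerivAt (phi d S0 R σ T)
      ((1 / ((d : ℝ) + 1)) • ∑ k : Fin (d + 1),
        (S0 * Real.exp ((R - σ ^ 2 / 2) * ((k : ℝ) + 1) * T / ((d : ℝ) + 1)
          + σ * ∑ i : Fin (d + 1), Amat d T k i * z i)) • (σ • lmap d T k)) z := by
  have h1 : ∀ k : Fin (d + 1), HasFDerivAt
      (fun y : Fin (d + 1) → ℝ => S0 * Real.exp ((R - σ ^ 2 / 2) * ((k : ℝ) + 1) * T / ((d : ℝ) + 1)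
        + σ * ∑ i : Fin (d + 1), Amat d T k i * y i))
      ((S0 * Real.exp ((R - σ ^ 2 / 2) * ((k : ℝ) + 1) * T / ((d : ℝ) + 1)
        + σ * ∑ i : Fin (d + 1), Amat d T k i * z i)) • (σ • lmap d T k)) z := by
    intro k
    have hfun : (fun y : Fin (d + 1) → ℝ => ∑ i : Fin (d + 1), Amat d T k i * y i)
        = ⇑(lmap d T k) := by
      funext y; rw [lmap_apply]
    have hl : HasFDerivAt (fun y : Fin (d + 1) → ℝ => ∑ i : Fin (d + 1), Amat d T k i * y i)
        (lmap d T k) z := by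
      rw [hfun]; exact (lmap d T k).hasFDerivAt
    have h := (((hl.const_mul σ).const_add
        ((R - σ ^ 2 / 2) * ((k : ℝ) + 1) * T / ((d : ℝ) + 1))).exp).const_mul S0
    rw [smul_smul] at h
    exact h
  have h2 := HasFDerivAt.fun_sum (fun k (_ : k ∈ Finset.univ) => h1 k)
  have h3 := h2.const_mul (1 / ((d : ℝ) + 1))
  exact h3

lemma tau_pos (d : ℕ) (T : ℝ) (hT : 0 < T) : 0 < tau d T :=
  Real.sqrt_pos.mpr (div_pos hT (by positivity))

lemma tau_le_Amat (d k : ℕ) (hk : k ≤ d) (T : ℝ) (hT : 0 < T) :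
    tau d T ≤ Amat d T k 0 := by
  have hπ := Real.pi_pos
  have hk' : (k : ℝ) ≤ (d : ℝ) := by exact_mod_cast hk
  have hden : (0 : ℝ) < 2 * (2 * (d : ℝ) + 3) := by positivity
  have hc : chi d 0 = π / (2 * (2 * (d : ℝ) + 3)) := by simp [chi]
  have hχpos : 0 < chi d 0 := by rw [hc]; positivity
  have harg : 2 * ((k : ℝ) + 1) * chi d 0 ≤ π / 2 := by
    rw [hc]
    have heq : 2 * ((k : ℝ) + 1) * (π / (2 * (2 * (d : ℝ) + 3)))
        = (2 * ((k : ℝ) + 1) * π) / (2 * (2 * (d : ℝ) + 3)) := by ring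
    rw [heq, div_le_div_iff₀ hden (by norm_num : (0:ℝ) < 2)]
    nlinarith
  have hlt : chi d 0 < 2 * ((k : ℝ) + 1) * chi d 0 := by nlinarith
  have hsin : Real.sin (chi d 0) < Real.sin (2 * ((k : ℝ) + 1) * chi d 0) :=
    Real.sin_lt_sin_of_lt_of_le_pi_div_two (by linarith) harg hlt
  have hsinc : 0 < Real.sin (chi d 0) :=
    Real.sin_pos_of_pos_of_lt_pi hχpos (by linarith)
  have hτ : 0 ≤ tau d T := Real.sqrt_nonneg _
  have h2 : tau d T * Real.sin (chi d 0) / Real.sin (chi d 0)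
      ≤ tau d T * Real.sin (2 * ((k : ℝ) + 1) * chi d 0) / Real.sin (chi d 0) := by
    gcongr
  rw [mul_div_assoc, div_self hsinc.ne', mul_one] at h2
  exact h2.trans_eq rfl

/-- `D⁰φ(z) ≥ σ τ_d φ(z) > 0` for every `z ∈ ℝ^{d+1}`. -/
theorem stmt8 (d : ℕ) (hd : 1 ≤ d) (S0 R σ T : ℝ) (hS0 : 0 < S0) (hσ : 0 < σ) (hT : 0 < T)
    (z : Fin (d + 1) → ℝ) :
    σ * tau d T * phi d S0 R σ T z ≤ pd (d + 1) 0 (phi d S0 R σ T) z ∧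
    0 < σ * tau d T * phi d S0 R σ T z := by
  have hτ := tau_pos d T hT
  set E : Fin (d + 1) → ℝ := fun k =>
    (R - σ ^ 2 / 2) * ((k : ℝ) + 1) * T / ((d : ℝ) + 1)
      + σ * ∑ i : Fin (d + 1), Amat d T k i * z i with hE
  have hpd : pd (d + 1) 0 (phi d S0 R σ T) z
      = (1 / ((d : ℝ) + 1)) * ∑ k : Fin (d + 1),
          (S0 * Real.exp (E k)) * (σ * Amat d T k 0) := by
    have hD := (phi_hasFDerivAt d S0 R σ T z).fderiv
    unfold pd
    rw [hD]
    simp only [ContinuousLinearMap.smul_apply, ContinuousLinearMap.sum_apply, lmap_single,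
      smul_eq_mul]
    rfl
  have hφ : phi d S0 R σ T z = (1 / ((d : ℝ) + 1)) * ∑ k : Fin (d + 1), S0 * Real.exp (E k) :=
    rfl
  have hφpos : 0 < phi d S0 R σ T z := by
    rw [hφ]
    have hs : 0 < ∑ k : Fin (d + 1), S0 * Real.exp (E k) :=
      Finset.sum_pos (fun k _ => by positivity) Finset.univ_nonempty
    have hc : 0 < 1 / ((d : ℝ) + 1) := by positivity
    exact mul_pos hc hs
  constructor
  · rw [hpd, hφ]
    have hsum : σ * tau d T * ((1 / ((d : ℝ) + 1)) * ∑ k : Fin (d + 1), S0 * Real.exp (E k))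
        = (1 / ((d : ℝ) + 1)) * ∑ k : Fin (d + 1), σ * tau d T * (S0 * Real.exp (E k)) := by
      simp only [Finset.mul_sum]
      exact Finset.sum_congr rfl fun k _ => by ring
    rw [hsum]
    apply mul_le_mul_of_nonneg_left _ (by positivity : (0:ℝ) ≤ 1 / ((d : ℝ) + 1))
    apply Finset.sum_le_sum
    intro k _
    have hA : tau d T ≤ Amat d T k 0 := tau_le_Amat d k (by omega : (k : ℕ) ≤ d) T hT
    have hexp : 0 < S0 * Real.exp (E k) := by positivity
    calc σ * tau d T * (S0 * Real.exp (E k))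
        ≤ σ * Amat d T k 0 * (S0 * Real.exp (E k)) :=
          mul_le_mul_of_nonneg_right (mul_le_mul_of_nonneg_left hA hσ.le) hexp.le
      _ = S0 * Real.exp (E k) * (σ * Amat d T k 0) := by ring
  · positivity
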